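/- Let X be a metric space and let S : [0,∞) × X → X be jointly continuous with S(0,x) = x and S(t+s,x) = S(t, S(s,x)) for all t,s ≥ 0 and x ∈ X. Assume there exists a compact set 𝒜 ⊆ X that attracts bounded sets, i.e. for every bounded B' ⊆ X and every ε > 0 there is T ≥ 0 such that S(t,·)(B') is contained in the ε-thickening of 𝒜 for all t ≥ T. Then every function u : ℝ → X with bounded range satisfying u(t+h) = S(h, u(t)) for all t ∈ ℝ and h ≥ 0 takes values in 𝒜 and is continuous, and the set 𝒦 of all such functions is a compact subset of the space C(ℝ, X) of continuous maps from ℝ to X equipped with the compact-open topology (the topology of uniform convergence on compact time intervals). -/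

import Mathlib

open Set Filter Bornology Topology

/-! A bounded complete trajectory `u` satisfies `u t = S T (u (t - T))` with `u (t - T)` in the
bounded set `range u`, so `u t` lies in every thickening of the attractor, hence in `A`. The set of
complete trajectories with values in `A` is closed in the product topology, hence compact by
Tychonoff. Writing `u t = S (t - t₀ + 1) (u (t₀ - 1))` near `t₀`, uniform continuity of `S` on
`[0, 2] × A` makes these trajectories equicontinuous, and Arzelà–Ascoli concludes. -/

section Equicontinuity

variable {α β γ : Type*} [PseudoMetricSpace α] [PseudoMetricSpace β] [PseudoMetricSpace γ]

theorem equicontinuousAt_of_continuousOn_prod {f : α × β → γ} {s : Set α} {K : Set β}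
    (hs : IsCompact s) (hK : IsCompact K) (hf : ContinuousOn f (s ×ˢ K)) {x₀ : α}
    (hx₀ : s ∈ 𝓝 x₀) : EquicontinuousAt (fun k : K => fun x => f (x, k)) x₀ := by
  rw [Metric.equicontinuousAt_iff]
  intro ε hε
  obtain ⟨δ, hδ, hfδ⟩ :=
    Metric.uniformContinuousOn_iff.1 ((hs.prod hK).uniformContinuousOn_of_continuous hf) ε hε
  obtain ⟨r, hr, hball⟩ := Metric.mem_nhds_iff.1 hx₀
  refine ⟨min δ r, lt_min hδ hr, fun x hx k => hfδ _ ⟨mem_of_mem_nhds hx₀, k.2⟩ _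
    ⟨hball (lt_of_lt_of_le hx (min_le_right _ _)), k.2⟩ ?_⟩
  rw [Prod.dist_eq, dist_self, max_eq_left dist_nonneg, dist_comm]
  exact lt_of_lt_of_le hx (min_le_left _ _)

end Equicontinuity

section Trajectories

variable {X : Type*} {S : ℝ → X → X}

def IsCompleteTrajectory (S : ℝ → X → X) (u : ℝ → X) : Prop :=
  ∀ t : ℝ, ∀ h ≥ (0:ℝ), u (t + h) = S h (u t)

def trajectoriesIn (S : ℝ → X → X) (A : Set X) : Set (ℝ → X) :=
  {u | IsCompleteTrajectory S u ∧ ∀ t, u t ∈ A}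

theorem IsCompleteTrajectory.eq_shift {u : ℝ → X} (hu : IsCompleteTrajectory S u) {s t : ℝ}
    (hst : s ≤ t) : u t = S (t - s) (u s) := by
  simpa using hu s (t - s) (sub_nonneg.2 hst)

theorem IsCompleteTrajectory.mem_of_attracts [PseudoMetricSpace X] {A : Set X} {u : ℝ → X}
    (hu : IsCompleteTrajectory S u) (hA : IsClosed A)
    (hattr : ∀ ε > (0:ℝ), ∃ T ≥ (0:ℝ), ∀ t ≥ T, S t '' range u ⊆ Metric.thickening ε A)
    (t : ℝ) : u t ∈ A := by
  rw [← hA.closure_eq, Metric.mem_closure_iff]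
  intro ε hε
  obtain ⟨T, hT, hTε⟩ := hattr ε hε
  have hut : u t ∈ Metric.thickening ε A := by
    rw [hu.eq_shift (sub_le_self t hT), sub_sub_cancel]
    exact hTε T le_rfl (mem_image_of_mem _ (mem_range_self _))
  exact Metric.mem_thickening_iff.1 hut

theorem isCompact_trajectoriesIn [TopologicalSpace X] [T2Space X] {A : Set X}
    (hS : ∀ h ≥ (0:ℝ), Continuous (S h)) (hA : IsCompact A) :
    IsCompact (trajectoriesIn S A) := by
  have hclosed : IsClosed (trajectoriesIn S A) := by
    simp only [trajectoriesIn, IsCompleteTrajectory, ofPred_and, ofPred_forall]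
    refine .inter (isClosed_iInter fun t => isClosed_iInter fun h => isClosed_iInter fun hh => ?_)
      (isClosed_iInter fun t => hA.isClosed.preimage (continuous_apply t))
    exact isClosed_eq (continuous_apply _) ((hS h hh).comp (continuous_apply t))
  exact (isCompact_univ_pi fun _ => hA).of_isClosed_subset hclosed fun u hu t _ => hu.2 t

theorem equicontinuous_trajectoriesIn [PseudoMetricSpace X] {A : Set X}
    (hS : ContinuousOn (fun p : ℝ × X => S p.1 p.2) (Ici 0 ×ˢ univ)) (hA : IsCompact A) :
    (trajectoriesIn S A).Equicontinuous := by
  intro t₀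
  have hshift : ContinuousOn (fun p : ℝ × X => S (p.1 - (t₀ - 1)) p.2)
      (Icc (t₀ - 1) (t₀ + 1) ×ˢ A) :=
    hS.comp (by fun_prop : Continuous fun p : ℝ × X => (p.1 - (t₀ - 1), p.2)).continuousOn
      fun p hp => ⟨sub_nonneg.2 hp.1.1, trivial⟩
  have hequi := (equicontinuousAt_of_continuousOn_prod isCompact_Icc hA hshift
    (Icc_mem_nhds (by linarith) (by linarith))).comp
    fun u : trajectoriesIn S A => (⟨u.1 (t₀ - 1), u.2.2 _⟩ : A)
  intro U hU
  filter_upwards [hequi U hU, Ioi_mem_nhds (show t₀ - 1 < t₀ by linarith)] with t ht ht'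
  intro u
  rw [u.2.1.eq_shift (le_of_lt ht'), u.2.1.eq_shift (sub_le_self t₀ zero_le_one)]
  exact ht u

end Trajectories

theorem complete_trajectories_compact_general {X : Type*} [MetricSpace X]
    (S : ℝ → X → X)
    (hcont : ContinuousOn (fun p : ℝ × X => S p.1 p.2) ((Ici 0) ×ˢ univ))
    (A : Set X) (hAcomp : IsCompact A)
    (hattr : ∀ B' : Set X, IsBounded B' → ∀ ε > (0:ℝ),
      ∃ T ≥ (0:ℝ), ∀ t ≥ T, S t '' B' ⊆ Metric.thickening ε A) :
    (∀ u : ℝ → X, IsBounded (range u) →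
      (∀ t : ℝ, ∀ h ≥ (0:ℝ), u (t + h) = S h (u t)) →
      (∀ t : ℝ, u t ∈ A) ∧ Continuous u) ∧
    IsCompact {φ : C(ℝ, X) | IsBounded (range φ) ∧
      ∀ t : ℝ, ∀ h ≥ (0:ℝ), φ (t + h) = S h (φ t)} := by
  have hS : ∀ h ≥ (0:ℝ), Continuous (S h) := fun h hh =>
    hcont.comp_continuous (Continuous.prodMk_right h) fun _ => ⟨hh, trivial⟩
  have hequi := equicontinuous_trajectoriesIn hcont hAcomp
  have hmem : ∀ u : ℝ → X, IsBounded (range u) → IsCompleteTrajectory S u →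
      u ∈ trajectoriesIn S A :=
    fun u hb hu => ⟨hu, hu.mem_of_attracts hAcomp.isClosed (hattr _ hb)⟩
  refine ⟨fun u hb hu => ⟨(hmem u hb hu).2, hequi.continuous_of_mem (hmem u hb hu)⟩, ?_⟩
  let 𝒦 : Set C(ℝ, X) := {φ | IsBounded (range φ) ∧ IsCompleteTrajectory S φ}
  have himage : ContinuousMap.toFun '' 𝒦 = trajectoriesIn S A := by
    ext u
    constructor
    · rintro ⟨φ, ⟨hb, hφ⟩, rfl⟩
      exact hmem φ hb hφ
    · intro hu
      exact ⟨⟨u, hequi.continuous_of_mem hu⟩,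
        ⟨hAcomp.isBounded.subset (range_subset_iff.2 hu.2), hu.1⟩, rfl⟩
  exact ArzelaAscoli.isCompact_of_equicontinuous 𝒦 (himage ▸ isCompact_trajectoriesIn hS hAcomp)
    (hequi.comp fun φ : 𝒦 => ⟨φ.1, hmem _ φ.2.1 φ.2.2⟩)

/-- Compactness of the set of complete bounded trajectories: if a jointly continuous
semigroup on a metric space has a compact attracting set `A`, then every complete
bounded trajectory takes values in `A` and is continuous, and the set of all complete
bounded trajectories is compact in `C(ℝ, X)` with the compact-open topology. -/
theorem complete_trajectories_compact {X : Type*} [MetricSpace X]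
    (S : ℝ → X → X)
    (hid : ∀ x : X, S 0 x = x)
    (hsemi : ∀ t ≥ (0:ℝ), ∀ s ≥ (0:ℝ), ∀ x : X, S (t + s) x = S t (S s x))
    (hcont : ContinuousOn (fun p : ℝ × X => S p.1 p.2) ((Ici 0) ×ˢ univ))
    (A : Set X) (hAcomp : IsCompact A)
    (hattr : ∀ B' : Set X, IsBounded B' → ∀ ε > (0:ℝ),
      ∃ T ≥ (0:ℝ), ∀ t ≥ T, S t '' B' ⊆ Metric.thickening ε A) :
    (∀ u : ℝ → X, IsBounded (range u) →
      (∀ t : ℝ, ∀ h ≥ (0:ℝ), u (t + h) = S h (u t)) →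
      (∀ t : ℝ, u t ∈ A) ∧ Continuous u) ∧
    IsCompact {φ : C(ℝ, X) | IsBounded (range φ) ∧
      ∀ t : ℝ, ∀ h ≥ (0:ℝ), φ (t + h) = S h (φ t)} :=
  complete_trajectories_compact_general S hcont A hAcomp hattr
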